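/- arXiv:1006.2616 — 2 statements merged into one kernel-verified Lean document; each statement's English description precedes it below -/
import Mathlib

section
/- If |I| = |O|, then the open graph (G, I, O) has a gflow if and only if the reversed open graph (G, O, I) has a gflow. -/
open scoped Classical
noncomputable section

variable {V : Type*} [Fintype V] [DecidableEq V]

/-- Odd neighborhood: vertices with an odd number of neighbors in `S`. -/
def oddNbhd (G : SimpleGraph V) (S : Finset V) : Finset V :=
  Finset.univ.filter fun v => Odd (S.filter (G.Adj v)).card

/-- `(g, r)` is a gflow of the open graph `(G, I, O)`. -/
def IsGflow (G : SimpleGraph V) (I O : Finset V)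
    (g : V → Finset V) (r : V → V → Prop) : Prop :=
  IsStrictOrder V r ∧
  ∀ u ∉ O,
    g u ⊆ Iᶜ ∧
    (∀ v ∈ g u, r u v) ∧
    u ∈ oddNbhd G (g u) ∧
    (∀ v ∈ oddNbhd G (g u), v ≠ u → r u v)

def HasGflow (G : SimpleGraph V) (I O : Finset V) : Prop :=
  ∃ g r, IsGflow G I O g r

/-- `g` is a focused gflow of the open graph `(G, I, O)`. -/
def IsFocusedGflow (G : SimpleGraph V) (I O : Finset V) (g : V → Finset V) : Prop :=
  (∀ u, ¬ Relation.TransGen (fun a b => a ∉ O ∧ b ∈ g a) u u) ∧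
  ∀ u ∉ O, g u ⊆ Iᶜ ∧ oddNbhd G (g u) ∩ Oᶜ = {u}


/-! Over `ZMod 2`, write `A` for the block of the adjacency matrix with rows `Oᶜ` and columns
`Iᶜ`, and `X` for the matrix whose column `u` is the indicator vector of `g u`. Then `g` is focused
exactly when `A * X = 1`. Every gflow can be focused, by adding to `g u` the focused corrections of
the later non-output vertices in `Odd (g u)`, and a focused gflow is a gflow for the transitive
closure of its successor relation. When `|I| = |O|` the matrix `A` is square, so `X * A = 1`, and
transposing this identity exhibits `Xᵀ` as a focused gflow of `(G, O, I)`. -/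

set_option linter.unusedSectionVars false

open Matrix

def indVec (S : Finset V) : V → ZMod 2 := fun v => if v ∈ S then 1 else 0

theorem indVec_eq_one_iff {S : Finset V} {v : V} : indVec S v = 1 ↔ v ∈ S := by
  by_cases hv : v ∈ S <;> simp [indVec, hv]

theorem indVec_filter_eq_one (x : V → ZMod 2) : indVec (Finset.univ.filter (x · = 1)) = x := by
  have two_valued : ∀ a : ZMod 2, (if a = 1 then 1 else 0) = a := by decide
  funext v
  simpa [indVec] using two_valued (x v)

theorem natCast_zmod_two_eq_ite (n : ℕ) : (n : ZMod 2) = if Odd n then 1 else 0 := by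
  split_ifs with hn
  · exact ZMod.natCast_eq_one_iff_odd.2 hn
  · exact ZMod.natCast_eq_zero_iff_even.2 (Nat.not_odd_iff_even.1 hn)

theorem adjMatrix_mulVec_indVec (G : SimpleGraph V) (S : Finset V) :
    G.adjMatrix (ZMod 2) *ᵥ indVec S = indVec (oddNbhd G S) := by
  funext w
  have : G.neighborFinset w ∩ S = S.filter (G.Adj w) := by
    ext; simp [and_comm]
  simp [indVec, oddNbhd, this, natCast_zmod_two_eq_ite]

theorem Finset.inter_compl_eq_singleton_iff {X O : Finset V} {u : V} (hu : u ∉ O) :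
    X ∩ Oᶜ = {u} ↔ ∀ w ∉ O, (w ∈ X ↔ w = u) := by
  simp only [Finset.ext_iff, Finset.mem_inter, Finset.mem_compl, Finset.mem_singleton]
  refine ⟨fun h w hw => by simpa [hw] using h w, fun h w => ?_⟩
  by_cases hw : w ∈ O
  · simp only [hw, not_true_eq_false, and_false, false_iff]
    rintro rfl; exact hu hw
  · simp [hw, h w hw]

theorem indVec_add_sum_eq_one {A T : Finset V} {B : V → Finset V} {b : V}
    (h : (indVec A + ∑ v ∈ T, indVec (B v)) b = 1) : b ∈ A ∨ ∃ v ∈ T, b ∈ B v := by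
  by_contra! hb
  have hsum : ∑ v ∈ T, indVec (B v) b = 0 := Finset.sum_eq_zero fun v hv => if_neg (hb.2 v hv)
  rw [Pi.add_apply, Finset.sum_apply, hsum, indVec, if_neg hb.1] at h
  exact zero_ne_one (add_zero (0 : ZMod 2) ▸ h)

variable {G : SimpleGraph V} {I O : Finset V} {g : V → Finset V}

theorem IsGflow.exists_focused_correction {r : V → V → Prop} (hg : IsGflow G I O g r) {u : V}
    (hu : u ∉ O) : ∃ S : Finset V, S ⊆ Iᶜ ∧ (∀ v ∈ S, r u v) ∧ oddNbhd G S ∩ Oᶜ = {u} := by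
  obtain ⟨hr, hflow⟩ := hg
  have hwf : WellFounded (Function.swap r) := Finite.wellFounded_of_trans_of_irrefl _
  induction u using hwf.induction with
  | _ u ih =>
  obtain ⟨hgI, hgr, hu_odd, hodd_r⟩ := hflow u hu
  set T := (oddNbhd G (g u) ∩ Oᶜ).erase u
  have hT : ∀ w, w ∈ T ↔ w ≠ u ∧ w ∈ oddNbhd G (g u) ∧ w ∉ O := by simp [T]
  have hTr : ∀ v ∈ T, r u v := fun v hv => hodd_r v ((hT v).1 hv).2.1 ((hT v).1 hv).1
  choose! S hSI hSr hSodd using fun v (hv : v ∈ T) => ih v (hTr v hv) ((hT v).1 hv).2.2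
  set x := indVec (g u) + ∑ v ∈ T, indVec (S v)
  refine ⟨Finset.univ.filter (x · = 1), fun b hb => ?_, fun b hb => ?_, ?_⟩
  · rcases indVec_add_sum_eq_one (Finset.mem_filter.1 hb).2 with h | ⟨v, hv, h⟩
    exacts [hgI h, hSI v hv h]
  · rcases indVec_add_sum_eq_one (Finset.mem_filter.1 hb).2 with h | ⟨v, hv, h⟩
    exacts [hgr b h, _root_.trans (hTr v hv) (hSr v hv b h)]
  rw [Finset.inter_compl_eq_singleton_iff hu]
  intro w hw
  have hS_w : ∀ v ∈ T, indVec (oddNbhd G (S v)) w = if w = v then 1 else 0 := fun v hv => by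
    simp [indVec, (Finset.inter_compl_eq_singleton_iff ((hT v).1 hv).2.2).1 (hSodd v hv) w hw]
  rw [← indVec_eq_one_iff, ← adjMatrix_mulVec_indVec, indVec_filter_eq_one, mulVec_add,
    mulVec_sum, Pi.add_apply, Finset.sum_apply]
  simp only [adjMatrix_mulVec_indVec]
  rw [Finset.sum_congr rfl hS_w, Finset.sum_ite_eq]
  by_cases hwu : w = u
  · subst hwu
    simp [indVec, hu_odd, hT]
  · by_cases hw_odd : w ∈ oddNbhd G (g u) <;> simp [indVec, hT, hwu, hw_odd, hw]

theorem IsGflow.exists_isFocusedGflow {r : V → V → Prop} (hg : IsGflow G I O g r) :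
    ∃ g', IsFocusedGflow G I O g' := by
  choose! S hSI hSr hSodd using fun u (hu : u ∉ O) => hg.exists_focused_correction hu
  have := hg.1
  refine ⟨S, fun u hu => ?_, fun u hu => ⟨hSI u hu, hSodd u hu⟩⟩
  exact irrefl u (Relation.transGen_minimal (fun a b h => hSr a h.1 b h.2) u u hu)

theorem IsFocusedGflow.hasGflow (hf : IsFocusedGflow G I O g) : HasGflow G I O := by
  obtain ⟨hacyc, hfoc⟩ := hf
  let s : V → V → Prop := fun a b => a ∉ O ∧ (b ∈ g a ∨ (b ∈ oddNbhd G (g a) ∧ b ≠ a))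
  -- Outside `O`, the only odd neighbour of `g a` is `a` itself.
  have hs_of_not_mem : ∀ {a b}, s a b → b ∉ O → a ∉ O ∧ b ∈ g a := by
    rintro a b ⟨ha, hb | ⟨hb, hba⟩⟩ hbO
    · exact ⟨ha, hb⟩
    · exact absurd (((Finset.inter_compl_eq_singleton_iff ha).1 (hfoc a ha).2 b hbO).1 hb) hba
  have hpath : ∀ {a b}, Relation.TransGen s a b → b ∉ O →
      Relation.TransGen (fun a b => a ∉ O ∧ b ∈ g a) a b := by
    intro a b hab hbO
    induction hab with
    | single hab => exact .single (hs_of_not_mem hab hbO)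
    | tail _ hcb ih =>
      have hcb := hs_of_not_mem hcb hbO
      exact .tail (ih hcb.1) hcb
  refine ⟨g, Relation.TransGen s,
    { toIrrefl := ⟨fun u hu => ?_⟩, toIsTrans := ⟨fun _ _ _ => .trans⟩ }, fun u hu => ?_⟩
  · obtain ⟨c, huc, -⟩ := Relation.TransGen.head'_iff.1 hu
    exact hacyc u (hpath hu huc.1)
  · have hu_odd : u ∈ oddNbhd G (g u) :=
      ((Finset.inter_compl_eq_singleton_iff hu).1 (hfoc u hu).2 u hu).2 rfl
    exact ⟨(hfoc u hu).1, fun v hv => .single ⟨hu, .inl hv⟩, hu_odd,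
      fun v hv hvu => .single ⟨hu, .inr ⟨hv, hvu⟩⟩⟩

theorem hasGflow_iff_exists_isFocusedGflow : HasGflow G I O ↔ ∃ g, IsFocusedGflow G I O g :=
  ⟨fun ⟨_, _, hg⟩ => hg.exists_isFocusedGflow, fun ⟨_, hf⟩ => hf.hasGflow⟩

variable (G) in
def adjBlock (A B : Finset V) : Matrix ↥(Aᶜ) ↥(Bᶜ) (ZMod 2) :=
  (G.adjMatrix (ZMod 2)).submatrix (↑) (↑)

variable (I O g) in
def correctionMatrix : Matrix ↥(Iᶜ) ↥(Oᶜ) (ZMod 2) := Matrix.of fun w u => indVec (g u) w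

theorem transpose_adjBlock (A B : Finset V) : (adjBlock G A B)ᵀ = adjBlock G B A := by
  rw [adjBlock, transpose_submatrix, SimpleGraph.transpose_adjMatrix, adjBlock]

theorem adjBlock_mul_correctionMatrix_apply (hgI : ∀ u ∉ O, g u ⊆ Iᶜ) (v u : ↥(Oᶜ)) :
    (adjBlock G O I * correctionMatrix I O g) v u = indVec (oddNbhd G (g u)) v := by
  have hu : (u : V) ∉ O := Finset.mem_compl.1 u.2
  rw [← adjMatrix_mulVec_indVec, mul_apply, mulVec, dotProduct]
  simp only [adjBlock, correctionMatrix, submatrix_apply, of_apply]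
  rw [Finset.sum_coe_sort (Iᶜ) fun w => G.adjMatrix (ZMod 2) v w * indVec (g u) w]
  refine Finset.sum_subset (Finset.subset_univ _) fun w _ hw => ?_
  rw [indVec, if_neg fun hwg => hw (hgI u hu hwg), mul_zero]

theorem adjBlock_mul_correctionMatrix_eq_one_iff (hgI : ∀ u ∉ O, g u ⊆ Iᶜ) :
    adjBlock G O I * correctionMatrix I O g = 1 ↔ ∀ u ∉ O, oddNbhd G (g u) ∩ Oᶜ = {u} := by
  rw [← Matrix.ext_iff, forall_comm]
  simp only [adjBlock_mul_correctionMatrix_apply hgI, one_apply, Subtype.forall, Subtype.mk.injEq,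
    Finset.mem_compl]
  refine forall₂_congr fun u hu => ?_
  rw [Finset.inter_compl_eq_singleton_iff hu]
  refine forall₂_congr fun w _ => ?_
  by_cases hwu : w = u <;> by_cases hw : w ∈ oddNbhd G (g u) <;> simp [indVec, hwu, hw]

variable (O g) in
def reverseCorrection (a : V) : Finset V := Finset.univ.filter fun b => b ∉ O ∧ a ∈ g b

theorem correctionMatrix_reverseCorrection :
    correctionMatrix O I (reverseCorrection O g) = (correctionMatrix I O g)ᵀ := by
  ext v a
  simp [correctionMatrix, reverseCorrection, indVec, Finset.mem_compl.1 v.2]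

theorem IsFocusedGflow.reverse (hcard : I.card = O.card) (hf : IsFocusedGflow G I O g) :
    IsFocusedGflow G O I (reverseCorrection O g) := by
  obtain ⟨hacyc, hfoc⟩ := hf
  have hg'O : ∀ a ∉ I, reverseCorrection O g a ⊆ Oᶜ := fun a _ b hb => by
    simpa [reverseCorrection] using (Finset.mem_filter.1 hb).2.1
  have hAX : adjBlock G O I * correctionMatrix I O g = 1 :=
    (adjBlock_mul_correctionMatrix_eq_one_iff fun u hu => (hfoc u hu).1).2 fun u hu => (hfoc u hu).2
  have hXA : correctionMatrix I O g * adjBlock G O I = 1 :=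
    (mul_eq_one_comm_of_card_eq _ _ _ (by simp [hcard])).1 hAX
  have hAX' : adjBlock G I O * correctionMatrix O I (reverseCorrection O g) = 1 := by
    rw [← transpose_adjBlock, correctionMatrix_reverseCorrection, ← transpose_mul, hXA,
      transpose_one]
  refine ⟨fun u hu => hacyc u ?_, fun a ha =>
    ⟨hg'O a ha, (adjBlock_mul_correctionMatrix_eq_one_iff hg'O).1 hAX' a ha⟩⟩
  rw [← Relation.transGen_swap]
  refine Relation.TransGen.mono (fun a b hab => ?_) u u hu
  simpa [reverseCorrection] using (Finset.mem_filter.1 hab.2).2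

theorem hasGflow_reverse_iff (G : SimpleGraph V) (I O : Finset V) (h : I.card = O.card) :
    HasGflow G I O ↔ HasGflow G O I := by
  have reverse : ∀ {I O : Finset V}, I.card = O.card → HasGflow G I O → HasGflow G O I := by
    intro I O hcard hIO
    obtain ⟨g, hg⟩ := hasGflow_iff_exists_isFocusedGflow.1 hIO
    exact (hg.reverse hcard).hasGflow
  exact ⟨reverse h, reverse h.symm⟩
end
end

section
/- Let (G, I, O) be an open graph such that every nonempty W ⊆ Oᶜ satisfies Odd(W) ⊄ W ∪ I (i.e., there is no nonempty internal set). Then the induced adjacency matrix A_G|_{Iᶜ}^{Oᶜ} (rows Oᶜ, columns Iᶜ, over F₂) viewed as the linear map W ↦ Odd(W) ∩ Iᶜ from 2^(Oᶜ) to 2^(Iᶜ) is injective. -/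
open scoped Classical
noncomputable section

variable {V : Type*} [Fintype V] [DecidableEq V]

open scoped symmDiff

lemma filter_symmDiff' (s t : Finset V) (p : V → Prop) [DecidablePred p] :
    (s ∆ t).filter p = s.filter p ∆ t.filter p := by
  ext x; simp [Finset.mem_symmDiff, Finset.mem_filter]; tauto

lemma card_symmDiff' (s t : Finset V) :
    (s ∆ t).card + 2 * (s ∩ t).card = s.card + t.card := by
  have h1 : (s ∆ t).card + (s ∩ t).card = (s ∪ t).card := by
    rw [← Finset.card_union_of_disjoint]
    · congr 1; ext x; simp [Finset.mem_symmDiff]; tauto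
    · rw [Finset.disjoint_left]; intro a ha; simp [Finset.mem_symmDiff] at ha ⊢; tauto
  have h2 := Finset.card_union_add_card_inter s t
  omega

lemma oddNbhd_symmDiff (G : SimpleGraph V) (A B : Finset V) :
    oddNbhd G (A ∆ B) = oddNbhd G A ∆ oddNbhd G B := by
  ext v
  simp only [oddNbhd, Finset.mem_symmDiff, Finset.mem_filter, Finset.mem_univ, true_and,
    filter_symmDiff']
  have := card_symmDiff' (A.filter (G.Adj v)) (B.filter (G.Adj v))
  rw [Nat.odd_iff, Nat.odd_iff, Nat.odd_iff]
  omega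

theorem induced_adjacency_injective (G : SimpleGraph V) (I O : Finset V)
    (h : ∀ W ⊆ Oᶜ, oddNbhd G W ⊆ W ∪ I → W = ∅) :
    ∀ W₁ ⊆ Oᶜ, ∀ W₂ ⊆ Oᶜ,
      oddNbhd G W₁ ∩ Iᶜ = oddNbhd G W₂ ∩ Iᶜ → W₁ = W₂ := by
  intro W₁ h₁ W₂ h₂ heq
  set W := W₁ ∆ W₂ with hW
  have hsub : W ⊆ Oᶜ := fun x hx => by
    rcases Finset.mem_symmDiff.1 hx with ⟨hx, -⟩ | ⟨hx, -⟩
    exacts [h₁ hx, h₂ hx]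
  have hodd : oddNbhd G W ∩ Iᶜ = ∅ := by
    have h0 : (oddNbhd G W₁ ∩ Iᶜ) ∆ (oddNbhd G W₂ ∩ Iᶜ) = (∅ : Finset V) := by
      rw [heq, symmDiff_self]; rfl
    rw [← h0]
    ext v
    simp only [hW, oddNbhd_symmDiff, Finset.mem_symmDiff, Finset.mem_inter]
    tauto
  have hWempty : W = ∅ := by
    apply h W hsub
    intro v hv
    rw [Finset.mem_union]
    by_cases hvI : v ∈ I
    · exact Or.inr hvI
    · exfalso
      have : v ∈ oddNbhd G W ∩ Iᶜ := Finset.mem_inter.2 ⟨hv, Finset.mem_compl.2 hvI⟩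
      simp [hodd] at this
  have : W₁ = W₂ := by
    have := hWempty
    rw [hW, ← Finset.bot_eq_empty] at this
    exact symmDiff_eq_bot.mp this
  exact this
end
end
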